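/- arXiv:1411.6782 — 3 statements merged into one kernel-verified Lean document; each statement's English description precedes it below -/
import Mathlib

section
/- Let κ : Λ × Λ → ℤ be an even symmetric bilinear form (κ(λ,λ) ∈ 2ℤ for all λ) invariant under the Weyl group W, let N ≥ 1, and set Λ^♯ = {λ ∈ Λ : κ(λ, μ) ∈ Nℤ for all μ ∈ Λ}. For a coroot α let δ_α = N / gcd(N, κ(α,α)/2), the denominator of the rational number κ(α,α)/(2N). Then for every λ ∈ Λ^♯ and every coroot α with root α̌, the integer ⟨λ, α̌⟩ is divisible by δ_α. -/
/-!
Applying the reflection `s_α` to the pair `(λ, α)` and using its invariance gives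
`2 κ(λ, α) = ⟨λ, α̌⟩ κ(α, α)`, i.e. `κ(λ, α) = ⟨λ, α̌⟩ · κ(α, α)/2`. For `λ ∈ Λ^♯` the left side is
divisible by `N`, and cancelling the common factor `gcd(N, κ(α, α)/2)` leaves `δ_α ∣ ⟨λ, α̌⟩`.
-/

lemma LinearMap.two_mul_apply_eq_of_reflection_invariant {R M : Type*} [CommRing R]
    [AddCommGroup M] [Module R M] (B : M →ₗ[R] M →ₗ[R] R) (f : Module.Dual R M) (v : M)
    (hfv : f v = 2) (hB : ∀ x y : M, B (x - f x • v) (y - f y • v) = B x y) (x : M) :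
    2 * B x v = f x * B v v := by
  have h := hB x v
  rw [hfv, two_smul, sub_add_cancel_left] at h
  simp only [map_sub, map_smul, map_neg, LinearMap.sub_apply, LinearMap.smul_apply,
    smul_eq_mul] at h
  linear_combination -h

lemma Int.ediv_gcd_dvd_of_dvd_mul {N Q k : ℤ} (hN : 0 < N) (h : N ∣ k * Q) :
    N / (Int.gcd N Q : ℤ) ∣ k := by
  have hmod : k * Q ≡ 0 * Q [ZMOD N] := by
    rwa [zero_mul, Int.modEq_zero_iff_dvd]
  exact Int.modEq_zero_iff_dvd.mp (hmod.cancel_right_div_gcd hN)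

theorem stmt_3_general (Λ : Type*) [AddCommGroup Λ] [Module ℤ Λ]
    (R : Finset (Module.Dual ℤ Λ)) (coroot : Module.Dual ℤ Λ → Λ)
    (hpair : ∀ a ∈ R, a (coroot a) = 2)
    (κ : Λ →ₗ[ℤ] Λ →ₗ[ℤ] ℤ)
    (heven : ∀ x : Λ, 2 ∣ κ x x)
    (hinv : ∀ a ∈ R, ∀ x y : Λ,
      κ (x - a x • coroot a) (y - a y • coroot a) = κ x y)
    (N : ℤ) (hN : 1 ≤ N)
    (δ : Λ → ℤ) (hδ : ∀ v : Λ, δ v = N / (Int.gcd N (κ v v / 2) : ℤ)) :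
    ∀ l ∈ {l : Λ | ∀ m : Λ, N ∣ κ l m}, ∀ a ∈ R, δ (coroot a) ∣ a l := by
  intro l hl a ha
  obtain ⟨Q, hQ⟩ := heven (coroot a)
  have hκ : κ l (coroot a) = a l * Q := by
    have hinv' := hinv a ha
    -- `•` in `hinv` is `zsmul`, while `κ` is linear for the given `Module ℤ Λ`
    simp only [← int_smul_eq_zsmul ‹Module ℤ Λ›] at hinv'
    have h := κ.two_mul_apply_eq_of_reflection_invariant a (coroot a) (hpair a ha) hinv' l
    rw [hQ] at h
    linarith
  rw [hδ, hQ, Int.mul_ediv_cancel_left _ two_ne_zero]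
  exact Int.ediv_gcd_dvd_of_dvd_mul (by omega) (hκ ▸ hl (coroot a))

/-- Let `κ` be an even symmetric bilinear form on `Λ`, invariant under the Weyl group
(equivalently, under each reflection `x ↦ x - ⟨x, a⟩ • coroot a`), and `N ≥ 1`.
For a coroot `α` let `δ_α = N / gcd(N, κ(α,α)/2)` (the denominator of
`κ(α,α)/(2N)`).  Then for every `λ ∈ Λ^♯ = {λ | κ(λ, ·) ∈ Nℤ}` and every coroot `α`
with root `a`, `δ_α` divides `⟨λ, a⟩`. -/
theorem stmt_3 (Λ : Type*) [AddCommGroup Λ] [Module ℤ Λ]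
    [Module.Free ℤ Λ] [Module.Finite ℤ Λ]
    (R : Finset (Module.Dual ℤ Λ)) (coroot : Module.Dual ℤ Λ → Λ)
    (hpair : ∀ a ∈ R, a (coroot a) = 2)
    (κ : Λ →ₗ[ℤ] Λ →ₗ[ℤ] ℤ) (hκsymm : ∀ x y : Λ, κ x y = κ y x)
    (heven : ∀ x : Λ, 2 ∣ κ x x)
    (hinv : ∀ a ∈ R, ∀ x y : Λ,
      κ (x - a x • coroot a) (y - a y • coroot a) = κ x y)
    (N : ℤ) (hN : 1 ≤ N)
    (δ : Λ → ℤ) (hδ : ∀ v : Λ, δ v = N / (Int.gcd N (κ v v / 2) : ℤ)) :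
    ∀ l ∈ {l : Λ | ∀ m : Λ, N ∣ κ l m}, ∀ a ∈ R, δ (coroot a) ∣ a l :=
  stmt_3_general Λ R coroot hpair κ heven hinv N hN δ hδ
end

section
/- Let κ : Λ × Λ → ℤ be an even symmetric bilinear form invariant under the Weyl group W and N ≥ 1; for a coroot α set δ_α = N / gcd(N, κ(α,α)/2). Then for any two coroots α, β one has s_α(δ_β·β) = δ_{s_α(β)}·s_α(β); consequently the set of modified coroots {δ_β·β : β a coroot of the root datum} is stable under every reflection s_α (these are the roots of the metaplectic dual root datum of Theorem 2.1). -/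
/-!
The reflection `s_α` preserves `κ`, hence the quadratic value `κ(v, v)` and with it `δ`; being
linear, it therefore carries `δ_β • β` to `δ_{s_α β} • s_α β`. Since `s_α` is an involution that
maps the set of coroots into itself, it permutes that set, and so permutes the modified coroots.
-/

section InvariantRescaling

variable {M F : Type*} [AddGroup M] [FunLike F M M] [AddMonoidHomClass F M M]

theorem map_zsmul_self_of_invariant (s : F) {δ : M → ℤ} (hδ : ∀ x, δ (s x) = δ x) (x : M) :
    s (δ x • x) = δ (s x) • s x := by
  rw [map_zsmul, hδ]

theorem image_image_zsmul_self_of_invariant (s : F) {δ : M → ℤ} (hδ : ∀ x, δ (s x) = δ x)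
    {C : Set M} (hC : s '' C = C) :
    s '' ((fun x ↦ δ x • x) '' C) = (fun x ↦ δ x • x) '' C := by
  conv_rhs => rw [← hC, Set.image_image]
  rw [Set.image_image]
  simp_rw [map_zsmul_self_of_invariant s hδ]

end InvariantRescaling

/- On the right, `•` is the `zsmul` of the additive group, not the (merely propositionally equal)
scalar action of the given `Module ℤ M` instance used by `Module.reflection_apply`. -/
theorem Module.reflection_apply_eq_sub_zsmul {M : Type*} [AddCommGroup M] [Module ℤ M] {x : M}
    {f : Module.Dual ℤ M} (h : f x = 2) (y : M) :
    Module.reflection h y = y - f y • x := by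
  rw [Module.reflection_apply, ← Int.cast_smul_eq_zsmul ℤ, Int.cast_id]

theorem stmt_6_general (Λ : Type*) [AddCommGroup Λ] [Module ℤ Λ]
    (R : Finset (Module.Dual ℤ Λ)) (coroot : Module.Dual ℤ Λ → Λ)
    (hpair : ∀ a ∈ R, a (coroot a) = 2)
    (hperm : ∀ a ∈ R, ∀ b ∈ R, ∃ c ∈ R,
      coroot b - a (coroot b) • coroot a = coroot c)
    (κ : Λ →ₗ[ℤ] Λ →ₗ[ℤ] ℤ)
    (hinv : ∀ a ∈ R, ∀ x y : Λ,
      κ (x - a x • coroot a) (y - a y • coroot a) = κ x y)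
    (N : ℤ)
    (δ : Λ → ℤ) (hδ : ∀ v : Λ, δ v = N / (Int.gcd N (κ v v / 2) : ℤ)) :
    (∀ a ∈ R, ∀ b ∈ R,
      (δ (coroot b) • coroot b) - a (δ (coroot b) • coroot b) • coroot a
        = δ (coroot b - a (coroot b) • coroot a)
            • (coroot b - a (coroot b) • coroot a)) ∧
    (∀ a ∈ R,
      (fun x : Λ => x - a x • coroot a) ''
          {v : Λ | ∃ b ∈ R, v = δ (coroot b) • coroot b}
        = {v : Λ | ∃ b ∈ R, v = δ (coroot b) • coroot b}) := by
  have hrefl : ∀ a (ha : a ∈ R), (fun x ↦ x - a x • coroot a) = Module.reflection (hpair a ha) :=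
    fun a ha ↦ funext fun _ ↦ (Module.reflection_apply_eq_sub_zsmul _ _).symm
  have hδ_refl : ∀ a (ha : a ∈ R) x, δ (Module.reflection (hpair a ha) x) = δ x := by
    intro a ha x
    rw [hδ, hδ, Module.reflection_apply_eq_sub_zsmul, hinv a ha]
  have hmodified : {v : Λ | ∃ b ∈ R, v = δ (coroot b) • coroot b} =
      (fun x ↦ δ x • x) '' (coroot '' R) := by
    ext v
    simp [eq_comm]
  refine ⟨fun a ha b _ ↦ ?_, fun a ha ↦ ?_⟩
  · simpa only [Module.reflection_apply_eq_sub_zsmul] using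
      map_zsmul_self_of_invariant (Module.reflection (hpair a ha)) (hδ_refl a ha) (coroot b)
  · have hcoroots : Module.reflection (hpair a ha) '' (coroot '' R) = coroot '' R := by
      refine (Module.bijOn_reflection_of_mapsTo _ ?_).image_eq
      rintro _ ⟨b, hb, rfl⟩
      obtain ⟨c, hc, hbc⟩ := hperm a ha b hb
      exact ⟨c, hc, by rw [Module.reflection_apply_eq_sub_zsmul, ← hbc]⟩
    rw [hrefl a ha, hmodified]
    exact image_image_zsmul_self_of_invariant _ (hδ_refl a ha) hcoroots

/-- With `κ` an even symmetric bilinear form on `Λ` invariant under the Weyl group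
(equivalently, under each reflection `s_a x = x - ⟨x, a⟩ • coroot a`), `N ≥ 1`,
`δ v = N / gcd(N, κ(v,v)/2)`, and the set of coroots permuted by the reflections:
for any two coroots `α = coroot a`, `β = coroot b` one has
`s_a (δ_β • β) = δ_{s_a β} • s_a β`; consequently the set of modified coroots
`{δ_β • β}` is stable under every reflection `s_a`. -/
theorem stmt_6 (Λ : Type*) [AddCommGroup Λ] [Module ℤ Λ]
    [Module.Free ℤ Λ] [Module.Finite ℤ Λ]
    (R : Finset (Module.Dual ℤ Λ)) (coroot : Module.Dual ℤ Λ → Λ)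
    (hpair : ∀ a ∈ R, a (coroot a) = 2)
    (hperm : ∀ a ∈ R, ∀ b ∈ R, ∃ c ∈ R,
      coroot b - a (coroot b) • coroot a = coroot c)
    (κ : Λ →ₗ[ℤ] Λ →ₗ[ℤ] ℤ) (hκsymm : ∀ x y : Λ, κ x y = κ y x)
    (heven : ∀ x : Λ, 2 ∣ κ x x)
    (hinv : ∀ a ∈ R, ∀ x y : Λ,
      κ (x - a x • coroot a) (y - a y • coroot a) = κ x y)
    (N : ℤ) (hN : 1 ≤ N)
    (δ : Λ → ℤ) (hδ : ∀ v : Λ, δ v = N / (Int.gcd N (κ v v / 2) : ℤ)) :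
    (∀ a ∈ R, ∀ b ∈ R,
      (δ (coroot b) • coroot b) - a (δ (coroot b) • coroot b) • coroot a
        = δ (coroot b - a (coroot b) • coroot a)
            • (coroot b - a (coroot b) • coroot a)) ∧
    (∀ a ∈ R,
      (fun x : Λ => x - a x • coroot a) ''
          {v : Λ | ∃ b ∈ R, v = δ (coroot b) • coroot b}
        = {v : Λ | ∃ b ∈ R, v = δ (coroot b) • coroot b}) :=
  stmt_6_general Λ R coroot hpair hperm κ hinv N δ hδ
end

section
/- Let R be a finite irreducible root system spanning a finite-dimensional ℚ-vector space V, with Weyl group W. If B₁ and B₂ are two W-invariant symmetric bilinear forms on V and B₁ is nonzero, then there exists c ∈ ℚ with B₂ = c·B₁. In particular, every W-invariant symmetric bilinear form on V is a rational multiple of the Killing-type form κ(x, y) = Σ_{α̌ ∈ Ř} α̌(x)·α̌(y), the sum over all roots α̌ of the dual root system. -/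
/-!
Reflection invariance alone forces `2 B(α, y) = B(α, α) α̌(y)` for every root `α`, so an invariant
form is determined by its diagonal values `B(α, α)` on roots. For a symmetric invariant `B` the
roots with `B(α, α) ≠ 0` are orthogonal to those with `B(α, α) = 0`, so by irreducibility an
invariant symmetric form vanishing at one `(α, α)` vanishes identically. Given `B₁ ≠ 0`, pick a
root with `B₁(α, α) ≠ 0` and apply this to `B₂ - (B₂(α, α) / B₁(α, α)) • B₁`. The form
`κ = ∑ α̌ ⊗ α̌` is invariant because reflections permute the coroots, and `κ(α, α) ≥ 4`.
-/

namespace RootSystemForm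

variable {K V : Type*} [Field K] [AddCommGroup V] [Module K V]
  {R : Finset V} {coroot : V → Module.Dual K V}

def IsIrreducible (R : Finset V) (coroot : V → Module.Dual K V) : Prop :=
  ¬ ∃ R₁ R₂ : Finset V, R₁.Nonempty ∧ R₂.Nonempty ∧
    (R₁ : Set V) ∪ (R₂ : Set V) = (R : Set V) ∧ Disjoint R₁ R₂ ∧
    ∀ α ∈ R₁, ∀ β ∈ R₂, coroot α β = 0

def IsReflectionInvariant (R : Finset V) (coroot : V → Module.Dual K V)
    (B : V →ₗ[K] V →ₗ[K] K) : Prop :=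
  ∀ α ∈ R, ∀ x y : V, B (x - coroot α x • α) (y - coroot α y • α) = B x y

lemma IsIrreducible.forall_or_forall_not (hirr : IsIrreducible R coroot) (p : V → Prop)
    (h : ∀ α ∈ R, ∀ β ∈ R, p α → ¬ p β → coroot α β = 0) :
    (∀ α ∈ R, p α) ∨ (∀ α ∈ R, ¬ p α) := by
  classical
  by_contra! hc
  obtain ⟨⟨β, hβR, hβ⟩, ⟨α, hαR, hα⟩⟩ := hc
  refine hirr ⟨R.filter p, R.filter (¬ p ·), ⟨α, by simp [hαR, hα]⟩, ⟨β, by simp [hβR, hβ]⟩,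
    ?_, Finset.disjoint_filter_filter_not _ _ _, ?_⟩
  · rw [← Finset.coe_union, Finset.filter_union_filter_not_eq]
  · simp only [Finset.mem_filter]
    exact fun γ hγ δ hδ => h γ hγ.1 δ hδ.1 hγ.2 hδ.2

namespace IsReflectionInvariant

lemma sub {B₁ B₂ : V →ₗ[K] V →ₗ[K] K} (h₁ : IsReflectionInvariant R coroot B₁)
    (h₂ : IsReflectionInvariant R coroot B₂) : IsReflectionInvariant R coroot (B₁ - B₂) := by
  intro α hα x y
  simp only [LinearMap.sub_apply, h₁ α hα, h₂ α hα]

lemma smul {B : V →ₗ[K] V →ₗ[K] K} (h : IsReflectionInvariant R coroot B) (c : K) :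
    IsReflectionInvariant R coroot (c • B) := by
  intro α hα x y
  simp only [LinearMap.smul_apply, h α hα]

variable {B : V →ₗ[K] V →ₗ[K] K}

/-- Invariance under `s_α` applied to the pair `(α, y)`, using `s_α α = -α`. -/
lemma two_mul_apply_root (hpair : ∀ α ∈ R, coroot α α = 2)
    (hB : IsReflectionInvariant R coroot B) {α : V} (hα : α ∈ R) (y : V) :
    2 * B α y = B α α * coroot α y := by
  have h := hB α hα α y
  rw [hpair α hα, show α - (2 : K) • α = -α by module] at h
  simp only [map_neg, map_sub, map_smul, LinearMap.neg_apply, smul_eq_mul] at h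
  linear_combination -h

variable [NeZero (2 : K)]

lemma eq_zero_of_apply_root_self_eq_zero (hspan : Submodule.span K (R : Set V) = ⊤)
    (hpair : ∀ α ∈ R, coroot α α = 2) (hB : IsReflectionInvariant R coroot B)
    (h : ∀ α ∈ R, B α α = 0) : B = 0 := by
  refine LinearMap.ext_on hspan fun α hα => LinearMap.ext fun y => ?_
  have h2 := hB.two_mul_apply_root hpair hα y
  rw [h α hα, zero_mul, mul_eq_zero] at h2
  exact h2.resolve_left two_ne_zero

lemma exists_apply_root_self_ne_zero (hspan : Submodule.span K (R : Set V) = ⊤)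
    (hpair : ∀ α ∈ R, coroot α α = 2) (hB : IsReflectionInvariant R coroot B) (hB₀ : B ≠ 0) :
    ∃ α ∈ R, B α α ≠ 0 := by
  by_contra! h
  exact hB₀ (hB.eq_zero_of_apply_root_self_eq_zero hspan hpair h)

lemma eq_zero_of_irreducible (hspan : Submodule.span K (R : Set V) = ⊤)
    (hpair : ∀ α ∈ R, coroot α α = 2) (hirr : IsIrreducible R coroot)
    (hsymm : ∀ x y : V, B x y = B y x) (hB : IsReflectionInvariant R coroot B)
    {α : V} (hα : α ∈ R) (hαα : B α α = 0) : B = 0 := by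
  have horth : ∀ β ∈ R, ∀ γ ∈ R, B β β ≠ 0 → ¬ B γ γ ≠ 0 → coroot β γ = 0 := by
    intro β hβ γ hγ hββ hγγ
    have h₁ := hB.two_mul_apply_root hpair hβ γ
    have h₂ := hB.two_mul_apply_root hpair hγ β
    rw [not_not.mp hγγ, zero_mul, hsymm] at h₂
    rw [h₂, eq_comm, mul_eq_zero] at h₁
    exact h₁.resolve_left hββ
  rcases hirr.forall_or_forall_not _ horth with h | h
  · exact absurd hαα (h α hα)
  · exact hB.eq_zero_of_apply_root_self_eq_zero hspan hpair fun β hβ => not_not.mp (h β hβ)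

theorem exists_eq_mul (hspan : Submodule.span K (R : Set V) = ⊤)
    (hpair : ∀ α ∈ R, coroot α α = 2) (hirr : IsIrreducible R coroot)
    {B₁ B₂ : V →ₗ[K] V →ₗ[K] K}
    (h₁symm : ∀ x y : V, B₁ x y = B₁ y x) (h₂symm : ∀ x y : V, B₂ x y = B₂ y x)
    (h₁ : IsReflectionInvariant R coroot B₁) (h₂ : IsReflectionInvariant R coroot B₂)
    (h₁ne : B₁ ≠ 0) :
    ∃ c : K, ∀ x y : V, B₂ x y = c * B₁ x y := by
  obtain ⟨α, hα, hαα⟩ := h₁.exists_apply_root_self_ne_zero hspan hpair h₁ne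
  set c := B₂ α α / B₁ α α
  have hD : B₂ - c • B₁ = 0 := by
    refine (h₂.sub (h₁.smul c)).eq_zero_of_irreducible hspan hpair hirr ?_ hα ?_
    · intro x y
      simp only [LinearMap.sub_apply, LinearMap.smul_apply, h₁symm x, h₂symm x]
    · simp only [LinearMap.sub_apply, LinearMap.smul_apply, smul_eq_mul, c]
      field_simp
      ring
  refine ⟨c, fun x y => ?_⟩
  simpa [sub_eq_zero] using LinearMap.congr_fun₂ hD x y

end IsReflectionInvariant

section CorootForm

variable (R coroot) in
def corootForm : V →ₗ[K] V →ₗ[K] K :=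
  ∑ α ∈ R, (coroot α).smulRight (coroot α)

@[simp]
lemma corootForm_apply (x y : V) :
    corootForm R coroot x y = ∑ α ∈ R, coroot α x * coroot α y := by
  simp [corootForm, LinearMap.sum_apply]

lemma corootForm_comm (x y : V) : corootForm R coroot x y = corootForm R coroot y x := by
  simp only [corootForm_apply, mul_comm]

lemma mapsTo_preReflection (hstab : ∀ α ∈ R, ∀ β ∈ R, β - coroot α β • α ∈ R) {α : V}
    (hα : α ∈ R) : Set.MapsTo (Module.preReflection α (coroot α)) R R :=
  fun β hβ => by simpa [Module.preReflection_apply] using hstab α hα β hβ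

variable [CharZero K] (hspan : Submodule.span K (R : Set V) = ⊤)
  (hpair : ∀ α ∈ R, coroot α α = 2) (hstab : ∀ α ∈ R, ∀ β ∈ R, β - coroot α β • α ∈ R)
include hspan hpair hstab

lemma coroot_preReflection {α β : V} (hα : α ∈ R) (hβ : β ∈ R) :
    coroot (Module.preReflection α (coroot α) β) =
      (coroot β).comp (Module.preReflection α (coroot α)) := by
  have hmaps : ∀ {γ}, γ ∈ R → Set.MapsTo (Module.preReflection γ (coroot γ)) R R :=
    mapsTo_preReflection hstab
  set s := Module.preReflection α (coroot α)
  have hs : Function.Involutive s := Module.involutive_preReflection (hpair α hα)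
  have hsβ : s β ∈ R := hmaps hα hβ
  refine Module.Dual.eq_of_preReflection_mapsTo R.finite_toSet hspan (hpair _ hsβ)
    (hmaps hsβ) ?_ ?_
  · simpa [hs β] using hpair β hβ
  · intro γ hγ
    have : s (s γ - coroot β (s γ) • β) ∈ R := hmaps hα (hmaps hβ (hmaps hα hγ))
    simpa [Module.preReflection_apply, hs γ] using this

lemma isReflectionInvariant_corootForm : IsReflectionInvariant R coroot (corootForm R coroot) := by
  intro α hα x y
  set s := Module.preReflection α (coroot α)
  have hs : Function.Involutive s := Module.involutive_preReflection (hpair α hα)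
  have hmaps : ∀ γ ∈ R, s γ ∈ R := fun γ hγ => mapsTo_preReflection hstab hα hγ
  simp only [corootForm_apply]
  refine Finset.sum_nbij' s s hmaps hmaps (fun γ _ => hs γ) (fun γ _ => hs γ) fun γ hγ => ?_
  rw [coroot_preReflection hspan hpair hstab hα hγ]
  rfl

end CorootForm

lemma corootForm_apply_self_pos [LinearOrder K] [IsStrictOrderedRing K]
    (hpair : ∀ α ∈ R, coroot α α = 2) {α : V} (hα : α ∈ R) : 0 < corootForm R coroot α α := by
  rw [corootForm_apply]
  calc (0 : K) < coroot α α * coroot α α := by simp [hpair α hα]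
    _ ≤ ∑ γ ∈ R, coroot γ α * coroot γ α :=
      Finset.single_le_sum (f := fun γ => coroot γ α * coroot γ α) (fun γ _ => mul_self_nonneg _) hα

end RootSystemForm

theorem stmt_16_general (V : Type*) [AddCommGroup V] [Module ℚ V]
    (R : Finset V) (hspan : Submodule.span ℚ (R : Set V) = ⊤)
    (coroot : V → Module.Dual ℚ V)
    (hpair : ∀ α ∈ R, coroot α α = 2)
    (hstab : ∀ α ∈ R, ∀ β ∈ R, β - coroot α β • α ∈ R)
    (hirr : ¬ ∃ R₁ R₂ : Finset V, R₁.Nonempty ∧ R₂.Nonempty ∧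
      (R₁ : Set V) ∪ (R₂ : Set V) = (R : Set V) ∧ Disjoint R₁ R₂ ∧ ∀ α ∈ R₁, ∀ β ∈ R₂, coroot α β = 0)
    (B₁ B₂ : V →ₗ[ℚ] V →ₗ[ℚ] ℚ)
    (h₁symm : ∀ x y : V, B₁ x y = B₁ y x) (h₂symm : ∀ x y : V, B₂ x y = B₂ y x)
    (h₁inv : ∀ α ∈ R, ∀ x y : V,
      B₁ (x - coroot α x • α) (y - coroot α y • α) = B₁ x y)
    (h₂inv : ∀ α ∈ R, ∀ x y : V,
      B₂ (x - coroot α x • α) (y - coroot α y • α) = B₂ x y)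
    (h₁ne : B₁ ≠ 0) :
    (∃ c : ℚ, ∀ x y : V, B₂ x y = c * B₁ x y) ∧
    (∃ c : ℚ, ∀ x y : V, B₂ x y = c * ∑ α ∈ R, coroot α x * coroot α y) := by
  refine ⟨RootSystemForm.IsReflectionInvariant.exists_eq_mul hspan hpair hirr h₁symm h₂symm
    h₁inv h₂inv h₁ne, ?_⟩
  obtain ⟨α, hα, -⟩ :=
    RootSystemForm.IsReflectionInvariant.exists_apply_root_self_ne_zero hspan hpair h₁inv h₁ne
  have hκ : RootSystemForm.corootForm R coroot ≠ 0 := fun h =>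
    (RootSystemForm.corootForm_apply_self_pos hpair hα).ne' (by simp [h])
  simpa using (RootSystemForm.isReflectionInvariant_corootForm hspan hpair hstab).exists_eq_mul
    hspan hpair hirr RootSystemForm.corootForm_comm h₂symm h₂inv hκ

/-- Let `R` be a finite irreducible root system spanning a finite-dimensional
`ℚ`-vector space `V`, with coroots `coroot α` in the dual space (`⟨α, α̌⟩ = 2`,
reflections preserve `R`, integrality holds), irreducible in the sense that `R`
admits no partition into two nonempty mutually orthogonal subsets.  If `B₁, B₂` are
symmetric bilinear forms invariant under the Weyl group (equivalently, under every
reflection `s_α`) and `B₁ ≠ 0`, then `B₂ = c·B₁` for some `c ∈ ℚ`.  In particular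
every invariant symmetric bilinear form is a rational multiple of the Killing-type
form `κ(x,y) = ∑_{α ∈ R} α̌(x)·α̌(y)`. -/
theorem stmt_16 (V : Type*) [AddCommGroup V] [Module ℚ V] [FiniteDimensional ℚ V]
    (R : Finset V) (hspan : Submodule.span ℚ (R : Set V) = ⊤)
    (hne : ∀ α ∈ R, α ≠ 0)
    (coroot : V → Module.Dual ℚ V)
    (hpair : ∀ α ∈ R, coroot α α = 2)
    (hstab : ∀ α ∈ R, ∀ β ∈ R, β - coroot α β • α ∈ R)
    (hint : ∀ α ∈ R, ∀ β ∈ R, ∃ n : ℤ, coroot α β = (n : ℚ))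
    (hirr : ¬ ∃ R₁ R₂ : Finset V, R₁.Nonempty ∧ R₂.Nonempty ∧
      (R₁ : Set V) ∪ (R₂ : Set V) = (R : Set V) ∧ Disjoint R₁ R₂ ∧ ∀ α ∈ R₁, ∀ β ∈ R₂, coroot α β = 0)
    (B₁ B₂ : V →ₗ[ℚ] V →ₗ[ℚ] ℚ)
    (h₁symm : ∀ x y : V, B₁ x y = B₁ y x) (h₂symm : ∀ x y : V, B₂ x y = B₂ y x)
    (h₁inv : ∀ α ∈ R, ∀ x y : V,
      B₁ (x - coroot α x • α) (y - coroot α y • α) = B₁ x y)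
    (h₂inv : ∀ α ∈ R, ∀ x y : V,
      B₂ (x - coroot α x • α) (y - coroot α y • α) = B₂ x y)
    (h₁ne : B₁ ≠ 0) :
    (∃ c : ℚ, ∀ x y : V, B₂ x y = c * B₁ x y) ∧
    (∃ c : ℚ, ∀ x y : V, B₂ x y = c * ∑ α ∈ R, coroot α x * coroot α y) :=
  stmt_16_general V R hspan coroot hpair hstab hirr B₁ B₂ h₁symm h₂symm h₁inv h₂inv h₁ne
end
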